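/- Let B ≤ Λ(n₁, q) and C ≤ Λ(n₂, q) be alternating matrix spaces over the finite field F_q, and let A ≤ Λ(n₁+n₂, q) be their disjoint direct sum. Then the totally-isotropic polynomials satisfy TI(A, x) = TI(B, x) · TI(C, x) in Z[x]. -/

import Mathlib

open Polynomial Matrix

def IsTotallyIsotropic {F : Type} [Field F] {ι : Type} [Fintype ι]
    (𝓜 : Submodule F (Matrix ι ι F)) (U : Submodule F (ι → F)) : Prop :=
  ∀ u ∈ U, ∀ v ∈ U, ∀ M ∈ 𝓜, u ⬝ᵥ M *ᵥ v = 0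

/-- `x_q^i := ∏_{j=0}^{i-1} (x - (q^j - 1)) ∈ ℤ[x]` for a fixed value `q`. -/
noncomputable def xq (q : ℕ) (i : ℕ) : Polynomial ℤ :=
  ∏ j ∈ Finset.range i, (X - C ((q : ℤ) ^ j - 1))

/-- The totally-isotropic polynomial `TI(𝓓, x) = 1 + ∑_{i=1}^{α(𝓓)} c_i(𝓓) x_q^i`,
written as `∑_{i=0}^{dim} c_i(𝓓) x_q^i` (the `i = 0` term is `1`, and `c_i(𝓓) = 0` for
`i > α(𝓓)`). -/
noncomputable def TIpoly {F : Type} [Field F] [Fintype F] {ι : Type} [Fintype ι]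
    (𝓓 : Submodule F (Matrix ι ι F)) : Polynomial ℤ :=
  ∑ i ∈ Finset.range (Fintype.card ι + 1),
    (Nat.card {U : Submodule F (ι → F) //
        IsTotallyIsotropic 𝓓 U ∧ Module.finrank F U = i} : ℤ) • xq (Fintype.card F) i

/-- The disjoint direct sum of two alternating matrix spaces. -/
noncomputable def disjointDirectSum {F : Type} [Field F] {n₁ n₂ : ℕ}
    (𝓑 : Submodule F (Matrix (Fin n₁) (Fin n₁) F))
    (𝓒 : Submodule F (Matrix (Fin n₂) (Fin n₂) F)) :
    Submodule F (Matrix (Fin n₁ ⊕ Fin n₂) (Fin n₁ ⊕ Fin n₂) F) :=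
  Submodule.span F
    ((fun B => Matrix.fromBlocks B 0 0 0) '' ↑𝓑 ∪ (fun C => Matrix.fromBlocks 0 0 0 C) '' ↑𝓒)

/-!
Evaluating `TI(𝓓, x)` at `x = q^m - 1` turns `x_q^i` into `∏_{j<i} (q^m - q^j)`, the number of
linear surjections from `F^m` onto an `i`-dimensional space. Grouping the linear maps `F^m → F^n`
by their image, the value `TI(𝓓, q^m - 1)` therefore counts the linear maps `F^m → F^n` whose
image is totally isotropic for `𝓓`. For the disjoint direct sum, such a map is exactly a pair of
maps into the two blocks, each with totally isotropic image, so the counts multiply. Two integer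
polynomials that agree at the infinitely many points `q^m - 1` are equal.
-/

open Module

section Counting

variable {F : Type} [Field F]

theorem LinearMap.surjective_pi_iff_linearIndependent {V ι : Type} [AddCommGroup V] [Module F V]
    [Fintype ι] [DecidableEq ι] (f : ι → Dual F V) :
    Function.Surjective (LinearMap.pi f) ↔ LinearIndependent F f := by
  have hdual : (LinearMap.pi f).dualMap ∘ (LinearEquiv.piRing F F ι F).symm =
      Fintype.linearCombination F f := by
    ext c v
    simp [LinearEquiv.piRing_symm_apply, Fintype.linearCombination_apply, mul_comm]
  rw [← LinearMap.dualMap_injective_iff, linearIndependent_iff_injective_fintypeLinearCombination,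
    ← hdual, EquivLike.injective_comp]

variable {V W : Type} [AddCommGroup V] [Module F V] [AddCommGroup W] [Module F W]

def surjectiveLinearMapsCongr {W' : Type} [AddCommGroup W'] [Module F W'] (e : W ≃ₗ[F] W') :
    {χ : V →ₗ[F] W // Function.Surjective χ} ≃ {χ : V →ₗ[F] W' // Function.Surjective χ} :=
  (LinearEquiv.arrowCongr (LinearEquiv.refl F V) e).toEquiv.subtypeEquiv fun _ =>
    (EquivLike.comp_surjective _ e).symm

def surjectiveLinearMapsEquivLinearIndependent (i : ℕ) :
    {χ : V →ₗ[F] (Fin i → F) // Function.Surjective χ} ≃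
      {f : Fin i → Dual F V // LinearIndependent F f} where
  toFun χ := ⟨fun k => LinearMap.proj k ∘ₗ χ.1, by
    rw [← LinearMap.surjective_pi_iff_linearIndependent]; exact χ.2⟩
  invFun f := ⟨LinearMap.pi f.1, (LinearMap.surjective_pi_iff_linearIndependent f.1).2 f.2⟩
  left_inv _ := rfl
  right_inv _ := rfl

def linearMapsWithRangeEquiv (U : Submodule F V) :
    {φ : W →ₗ[F] V // LinearMap.range φ = U} ≃ {ψ : W →ₗ[F] U // Function.Surjective ψ} where
  toFun φ := ⟨φ.1.codRestrict U fun x => φ.2.le (LinearMap.mem_range_self _ x), by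
    rintro ⟨u, hu⟩
    obtain ⟨x, hx⟩ := φ.2.ge hu
    exact ⟨x, Subtype.ext hx⟩⟩
  invFun ψ := ⟨U.subtype ∘ₗ ψ.1, by
    rw [LinearMap.range_comp, LinearMap.range_eq_top.2 ψ.2, Submodule.map_subtype_top]⟩
  left_inv _ := rfl
  right_inv _ := rfl

variable [Fintype F] [Finite V] [Finite W]

instance : Finite (V →ₗ[F] W) := Module.finite_of_finite F

theorem card_surjective_linearMap :
    (Nat.card {χ : V →ₗ[F] W // Function.Surjective χ} : ℤ) =
      ∏ j ∈ Finset.range (finrank F W),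
        ((Fintype.card F : ℤ) ^ finrank F V - Fintype.card F ^ j) := by
  rw [Nat.card_congr ((surjectiveLinearMapsCongr (finBasis F W).equivFun).trans
    (surjectiveLinearMapsEquivLinearIndependent _))]
  rcases le_or_gt (finrank F W) (finrank F V) with hle | hlt
  · rw [card_linearIndependent (by rwa [Subspace.dual_finrank_eq]), Subspace.dual_finrank_eq,
      ← Fin.prod_univ_eq_prod_range, Nat.cast_prod]
    refine Finset.prod_congr rfl fun j _ => ?_
    rw [Nat.cast_sub (Nat.pow_le_pow_right Fintype.card_pos (by omega))]
    push_cast; rfl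
  · rw [Finset.prod_eq_zero (Finset.mem_range.2 hlt) (sub_self _), Nat.cast_eq_zero,
      Nat.card_eq_zero]
    left
    refine ⟨fun ⟨f, hf⟩ => ?_⟩
    have := hf.fintype_card_le_finrank
    rw [Fintype.card_fin, Subspace.dual_finrank_eq] at this
    omega

theorem card_linearMap_range_eq (U : Submodule F V) :
    (Nat.card {φ : W →ₗ[F] V // LinearMap.range φ = U} : ℤ) =
      ∏ j ∈ Finset.range (finrank F U),
        ((Fintype.card F : ℤ) ^ finrank F W - Fintype.card F ^ j) := by
  rw [Nat.card_congr (linearMapsWithRangeEquiv U), card_surjective_linearMap]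

theorem card_linearMap_range_mem (P : Submodule F V → Prop) :
    (Nat.card {φ : W →ₗ[F] V // P (LinearMap.range φ)} : ℤ) =
      ∑ i ∈ Finset.range (finrank F V + 1),
        (Nat.card {U : Submodule F V // P U ∧ finrank F U = i} : ℤ) *
        ∏ j ∈ Finset.range i, ((Fintype.card F : ℤ) ^ finrank F W - Fintype.card F ^ j) := by
  classical
  have := Fintype.ofFinite (W →ₗ[F] V)
  have := Fintype.ofFinite (Submodule F V)
  set s : ℕ → ℤ := fun i =>
    ∏ j ∈ Finset.range i, ((Fintype.card F : ℤ) ^ finrank F W - Fintype.card F ^ j)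
  calc (Nat.card {φ : W →ₗ[F] V // P (LinearMap.range φ)} : ℤ)
      = ∑ U ∈ {U | P U}, (Nat.card {φ : W →ₗ[F] V // LinearMap.range φ = U} : ℤ) := by
        simp only [Nat.card_eq_fintype_card, Fintype.card_subtype]
        rw [Finset.card_eq_sum_card_fiberwise (f := LinearMap.range) (t := {U | P U})
          (fun φ hφ => by simpa using hφ), Nat.cast_sum]
        refine Finset.sum_congr rfl fun U hU => ?_
        simp only [Finset.filter_filter, Finset.mem_filter, Finset.mem_univ, true_and] at hU ⊢
        congr 3
        ext φ
        exact ⟨And.right, fun h => ⟨h ▸ hU, h⟩⟩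
    _ = ∑ U ∈ {U | P U}, s (finrank F U) :=
        Finset.sum_congr rfl fun U _ => card_linearMap_range_eq U
    _ = ∑ i ∈ Finset.range (finrank F V + 1), ∑ U ∈ {U | P U ∧ finrank F U = i}, s i := by
        rw [← Finset.sum_fiberwise_of_maps_to (g := fun U : Submodule F V => finrank F U)
          (t := Finset.range (finrank F V + 1)) (fun U _ => by
            simpa [Nat.lt_succ_iff] using Submodule.finrank_le U)]
        refine Finset.sum_congr rfl fun i _ => ?_
        rw [Finset.filter_filter]
        exact Finset.sum_congr rfl fun U hU => by rw [(Finset.mem_filter.1 hU).2.2]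
    _ = _ := by
        simp [Nat.card_eq_fintype_card, Fintype.card_subtype, s]

theorem eval_xq (q m i : ℕ) :
    (xq q i).eval ((q : ℤ) ^ m - 1) = ∏ j ∈ Finset.range i, ((q : ℤ) ^ m - q ^ j) := by
  simp [xq, eval_prod]

theorem eval_TIpoly {ι : Type} [Fintype ι] (𝓓 : Submodule F (Matrix ι ι F)) :
    (TIpoly 𝓓).eval ((Fintype.card F : ℤ) ^ finrank F W - 1) =
      Nat.card {φ : W →ₗ[F] (ι → F) // IsTotallyIsotropic 𝓓 (LinearMap.range φ)} := by
  rw [card_linearMap_range_mem, TIpoly, eval_finsetSum, finrank_fintype_fun_eq_card]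
  simp [eval_xq]

end Counting

section DisjointDirectSum

variable {F : Type} [Field F]

theorem isTotallyIsotropic_span_iff {ι : Type} [Fintype ι] {S : Set (Matrix ι ι F)}
    {U : Submodule F (ι → F)} :
    IsTotallyIsotropic (Submodule.span F S) U ↔ ∀ u ∈ U, ∀ v ∈ U, ∀ M ∈ S, u ⬝ᵥ M *ᵥ v = 0 := by
  refine ⟨fun h u hu v hv M hM => h u hu v hv M (Submodule.subset_span hM), ?_⟩
  intro h u hu v hv M hM
  induction hM using Submodule.span_induction with
  | mem M hM => exact h u hu v hv M hM
  | zero => simp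
  | add M N _ _ hM hN => rw [add_mulVec, dotProduct_add, hM, hN, add_zero]
  | smul c M _ hM => rw [smul_mulVec, dotProduct_smul, hM, smul_zero]

variable {ι κ : Type} [Fintype ι] [Fintype κ]

theorem dotProduct_fromBlocks₁₁_mulVec (B : Matrix ι ι F) (u v : ι ⊕ κ → F) :
    u ⬝ᵥ fromBlocks B 0 0 0 *ᵥ v = (u ∘ Sum.inl) ⬝ᵥ B *ᵥ (v ∘ Sum.inl) := by
  rw [← Sum.elim_comp_inl_inr u, ← Sum.elim_comp_inl_inr v, fromBlocks_mulVec,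
    sumElim_dotProduct_sumElim]
  simp

theorem dotProduct_fromBlocks₂₂_mulVec (C : Matrix κ κ F) (u v : ι ⊕ κ → F) :
    u ⬝ᵥ fromBlocks 0 0 0 C *ᵥ v = (u ∘ Sum.inr) ⬝ᵥ C *ᵥ (v ∘ Sum.inr) := by
  rw [← Sum.elim_comp_inl_inr u, ← Sum.elim_comp_inl_inr v, fromBlocks_mulVec,
    sumElim_dotProduct_sumElim]
  simp

theorem isTotallyIsotropic_disjointDirectSum_iff {n₁ n₂ : ℕ}
    (𝓑 : Submodule F (Matrix (Fin n₁) (Fin n₁) F)) (𝓒 : Submodule F (Matrix (Fin n₂) (Fin n₂) F))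
    (U : Submodule F (Fin n₁ ⊕ Fin n₂ → F)) :
    IsTotallyIsotropic (disjointDirectSum 𝓑 𝓒) U ↔
      IsTotallyIsotropic 𝓑 (U.map (LinearMap.funLeft F F Sum.inl)) ∧
        IsTotallyIsotropic 𝓒 (U.map (LinearMap.funLeft F F Sum.inr)) := by
  rw [disjointDirectSum, isTotallyIsotropic_span_iff]
  constructor
  · intro h
    constructor
    · rintro _ ⟨u, hu, rfl⟩ _ ⟨v, hv, rfl⟩ B hB
      exact (dotProduct_fromBlocks₁₁_mulVec B u v).symm.trans (h u hu v hv _ (Or.inl ⟨B, hB, rfl⟩))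
    · rintro _ ⟨u, hu, rfl⟩ _ ⟨v, hv, rfl⟩ C hC
      exact (dotProduct_fromBlocks₂₂_mulVec C u v).symm.trans (h u hu v hv _ (Or.inr ⟨C, hC, rfl⟩))
  · rintro ⟨h𝓑, h𝓒⟩ u hu v hv M (⟨B, hB, rfl⟩ | ⟨C, hC, rfl⟩)
    · rw [dotProduct_fromBlocks₁₁_mulVec]
      exact h𝓑 _ (Submodule.mem_map_of_mem hu) _ (Submodule.mem_map_of_mem hv) B hB
    · rw [dotProduct_fromBlocks₂₂_mulVec]
      exact h𝓒 _ (Submodule.mem_map_of_mem hu) _ (Submodule.mem_map_of_mem hv) C hC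

theorem card_isotropic_linearMap_disjointDirectSum {W : Type} [AddCommGroup W] [Module F W]
    {n₁ n₂ : ℕ} (𝓑 : Submodule F (Matrix (Fin n₁) (Fin n₁) F))
    (𝓒 : Submodule F (Matrix (Fin n₂) (Fin n₂) F)) :
    Nat.card {φ : W →ₗ[F] (Fin n₁ ⊕ Fin n₂ → F) //
        IsTotallyIsotropic (disjointDirectSum 𝓑 𝓒) (LinearMap.range φ)} =
      Nat.card {φ : W →ₗ[F] (Fin n₁ → F) // IsTotallyIsotropic 𝓑 (LinearMap.range φ)} *
        Nat.card {φ : W →ₗ[F] (Fin n₂ → F) // IsTotallyIsotropic 𝓒 (LinearMap.range φ)} := by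
  let split : (W →ₗ[F] (Fin n₁ ⊕ Fin n₂ → F)) ≃ (W →ₗ[F] (Fin n₁ → F)) × (W →ₗ[F] (Fin n₂ → F)) :=
    (LinearEquiv.congrRight (LinearEquiv.sumArrowLequivProdArrow _ _ F F)).toEquiv.trans
      (LinearMap.prodEquiv (S := F)).symm.toEquiv
  rw [← Nat.card_prod, ← Nat.card_congr Equiv.subtypeProdEquivProd]
  refine Nat.card_congr (split.subtypeEquiv fun φ => ?_)
  rw [isTotallyIsotropic_disjointDirectSum_iff, ← LinearMap.range_comp, ← LinearMap.range_comp]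
  rfl

end DisjointDirectSum

theorem TIpoly_disjointDirectSum_general {F : Type} [Field F] [Fintype F] {n₁ n₂ : ℕ}
    (𝓑 : Submodule F (Matrix (Fin n₁) (Fin n₁) F))
    (𝓒 : Submodule F (Matrix (Fin n₂) (Fin n₂) F)) :
    TIpoly (disjointDirectSum 𝓑 𝓒) = TIpoly 𝓑 * TIpoly 𝓒 := by
  have hq : 1 < (Fintype.card F : ℤ) := mod_cast Fintype.one_lt_card
  let point : ℕ → ℤ := fun m => (Fintype.card F : ℤ) ^ finrank F (Fin m → F) - 1
  have point_injective : Function.Injective point := fun a b h => by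
    simpa using pow_right_injective₀ (by omega) hq.ne' (sub_left_injective h)
  refine eq_of_infinite_eval_eq _ _ ((Set.infinite_range_of_injective point_injective).mono ?_)
  rintro _ ⟨m, rfl⟩
  simp only [point, Set.mem_ofPred_eq, eval_mul, eval_TIpoly,
    card_isotropic_linearMap_disjointDirectSum, Nat.cast_mul]

theorem TIpoly_disjointDirectSum {F : Type} [Field F] [Fintype F] {n₁ n₂ : ℕ}
    (𝓑 : Submodule F (Matrix (Fin n₁) (Fin n₁) F))
    (𝓒 : Submodule F (Matrix (Fin n₂) (Fin n₂) F))
    (haltB : ∀ B ∈ 𝓑, ∀ u : Fin n₁ → F, u ⬝ᵥ B *ᵥ u = 0)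
    (haltC : ∀ C ∈ 𝓒, ∀ u : Fin n₂ → F, u ⬝ᵥ C *ᵥ u = 0) :
    TIpoly (disjointDirectSum 𝓑 𝓒) = TIpoly 𝓑 * TIpoly 𝓒 :=
  TIpoly_disjointDirectSum_general 𝓑 𝓒
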